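/- Let Δ be a finite set with |Δ| = m, let r ≥ 1, let h ∈ Sym({1,…,r}) with h ≠ 1, and let k_1, …, k_r ∈ Sym(Δ). Then the permutation g of Δ^r defined by g(u)_i = k_i(u_{h⁻¹(i)}) has at most m^{r−1} fixed points; equivalently, its support has size at least (m−1)·m^{r−1}. -/

import Mathlib

/-!
A fixed point `u` of `g` satisfies `u j = k j (u (h⁻¹ j))` for every `j`. Choosing `j` with
`h⁻¹ j ≠ j`, the coordinate `u j` is determined by the others, so restricting fixed points to the
`r - 1` coordinates other than `j` is injective. Hence there are at most `m ^ (r - 1)` fixed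
points, and at least `m ^ r - m ^ (r - 1) = (m - 1) * m ^ (r - 1)` moved points.
-/

/-- The permutation of Δ^r in product-action form with base k = (k_1,…,k_r) ∈ Sym(Δ)^r and
top h ∈ Sym({1,…,r}): it sends u to the tuple whose i-th entry is k_i(u_{h⁻¹(i)}). -/
def paPerm {Δ : Type*} {r : ℕ} (k : Fin r → Equiv.Perm Δ) (h : Equiv.Perm (Fin r)) :
    Equiv.Perm (Fin r → Δ) where
  toFun u i := k i (u (h⁻¹ i))
  invFun u i := (k (h i))⁻¹ (u (h i))
  left_inv u := by funext i; simp
  right_inv u := by funext i; simp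

theorem Nat.card_subtype_not_fixed {α : Type*} [Finite α] (f : α → α) :
    Nat.card {x // f x ≠ x} = Nat.card α - Nat.card {x // f x = x} := by
  classical
  have := Fintype.ofFinite α
  simp only [Nat.card_eq_fintype_card]
  exact Fintype.card_subtype_compl _

section paPerm

variable {Δ : Type*} {r : ℕ} {k : Fin r → Equiv.Perm Δ} {h : Equiv.Perm (Fin r)}

theorem paPerm_apply (u : Fin r → Δ) (i : Fin r) : paPerm k h u i = k i (u (h⁻¹ i)) := rfl

theorem paPerm_fixed_ext {j : Fin r} (hj : h⁻¹ j ≠ j) {u v : Fin r → Δ}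
    (hu : paPerm k h u = u) (hv : paPerm k h v = v) (huv : ∀ i ≠ j, u i = v i) : u = v := by
  funext i
  obtain rfl | hi := eq_or_ne i j
  · rw [← hu, ← hv, paPerm_apply, paPerm_apply, huv _ hj]
  · exact huv i hi

theorem card_fixed_paPerm_le [Finite Δ] (k : Fin r → Equiv.Perm Δ) (hh : h ≠ 1) :
    Nat.card {u : Fin r → Δ // paPerm k h u = u} ≤ Nat.card Δ ^ (r - 1) := by
  obtain ⟨j, hj⟩ := DFunLike.ne_iff.mp (inv_ne_one.mpr hh)
  have restrict_injective : Function.Injective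
      fun (u : {u : Fin r → Δ // paPerm k h u = u}) (i : {i // i ≠ j}) => u.1 i :=
    fun u v huv => Subtype.ext <| paPerm_fixed_ext hj u.2 v.2 fun i hi => congrFun huv ⟨i, hi⟩
  calc Nat.card {u : Fin r → Δ // paPerm k h u = u}
      ≤ Nat.card ({i : Fin r // i ≠ j} → Δ) := Nat.card_le_card_of_injective _ restrict_injective
    _ = Nat.card Δ ^ (r - 1) := by simp [Nat.card_fun, Nat.card_eq_fintype_card]

end paPerm

theorem stmt_12_general {Δ : Type*} [Fintype Δ] (r : ℕ)
    (h : Equiv.Perm (Fin r)) (hh : h ≠ 1) (k : Fin r → Equiv.Perm Δ) :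
    Nat.card {u : Fin r → Δ // paPerm k h u = u} ≤ Fintype.card Δ ^ (r - 1) ∧
    (Fintype.card Δ - 1) * Fintype.card Δ ^ (r - 1)
      ≤ Nat.card {u : Fin r → Δ // paPerm k h u ≠ u} := by
  rw [← Nat.card_eq_fintype_card]
  have hfix := card_fixed_paPerm_le k hh
  refine ⟨hfix, ?_⟩
  obtain ⟨s, rfl⟩ : ∃ s, r = s + 1 :=
    Nat.exists_eq_add_one.mpr <| Nat.pos_of_ne_zero <| by
      rintro rfl
      exact hh (Subsingleton.elim _ _)
  calc (Nat.card Δ - 1) * Nat.card Δ ^ (s + 1 - 1)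
      = Nat.card (Fin (s + 1) → Δ) - Nat.card Δ ^ (s + 1 - 1) := by
        rw [Nat.card_fun, Nat.card_fin, Nat.add_sub_cancel, Nat.sub_mul, one_mul, pow_succ']
    _ ≤ Nat.card (Fin (s + 1) → Δ) - Nat.card {u : Fin (s + 1) → Δ // paPerm k h u = u} :=
        Nat.sub_le_sub_left hfix _
    _ = Nat.card {u : Fin (s + 1) → Δ // paPerm k h u ≠ u} :=
        (Nat.card_subtype_not_fixed _).symm

/-- Let Δ be a finite set with |Δ| = m, let r ≥ 1, let h ∈ Sym({1,…,r}) with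
h ≠ 1, and let k_1, …, k_r ∈ Sym(Δ). Then the permutation g of Δ^r defined by
g(u)_i = k_i(u_{h⁻¹(i)}) has at most m^{r−1} fixed points; equivalently, its support has
size at least (m−1)·m^{r−1}. -/
theorem stmt_12 {Δ : Type*} [Fintype Δ] (r : ℕ) (hr : 1 ≤ r)
    (h : Equiv.Perm (Fin r)) (hh : h ≠ 1) (k : Fin r → Equiv.Perm Δ) :
    Nat.card {u : Fin r → Δ // paPerm k h u = u} ≤ Fintype.card Δ ^ (r - 1) ∧
    (Fintype.card Δ - 1) * Fintype.card Δ ^ (r - 1)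
      ≤ Nat.card {u : Fin r → Δ // paPerm k h u ≠ u} :=
  stmt_12_general r h hh k
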